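/- arXiv:2205.05800 — 2 statements merged into one kernel-verified Lean document; each statement's English description precedes it below -/
import Mathlib

section
/- Let P be a row-stochastic matrix with stationary distribution ν satisfying ‖P^{t_mix} − 1ν^T‖_∞ ≤ 1/2 for a positive integer t_mix, and let c ∈ R^S with ‖c‖_∞ ≤ c̄. Then for any integer T' ≥ t_mix, the truncation error satisfies ‖Σ_{t=T'}^{∞} (1ν^T − P^t) c‖_∞ ≤ 2 c̄ · t_mix · (1/2)^{⌊T'/t_mix⌋}; in particular the series converges absolutely. -/
open Matrix BigOperators

/-- The ℓ∞ operator norm of a matrix: maximum absolute row sum. -/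
noncomputable def linftyNorm {S : Type*} [Fintype S] [Nonempty S] (A : Matrix S S ℝ) : ℝ :=
  Finset.univ.sup' Finset.univ_nonempty (fun i => ∑ j, |A i j|)

/-!
Write `Π = 1νᵀ`. Since `P Π = Π P = Π² = Π`, we get `(P^m − Π)^q = P^(mq) − Π` for `q ≥ 1`, hence
`P^n − Π = P^(n mod m) (P^m − Π)^(n / m)`; as `‖P^k‖∞ ≤ 1` for a stochastic matrix,
`‖P^n − Π‖∞ ≤ 2^(-⌊n/m⌋)` once `n ≥ m = t_mix`. The `t`-th term of the series is then at most
`c̄ 2^(-⌊T'/m⌋) 2^(-⌊t/m⌋)`, and each exponent `⌊t/m⌋ = q` occurs for exactly `m` values of `t`,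
so these bounds sum to `2 c̄ m 2^(-⌊T'/m⌋)`.
-/

attribute [local instance] Matrix.linftyOpNormedRing

theorem pow_mul_eq_of_mul_eq {M : Type*} [Monoid M] {p e : M} (h : p * e = e)
    (k : ℕ) : p ^ k * e = e := by
  induction k with
  | zero => rw [pow_zero, one_mul]
  | succ k ih => rw [pow_succ, mul_assoc, h, ih]

theorem mul_pow_eq_of_mul_eq {M : Type*} [Monoid M] {p e : M} (h : e * p = e)
    (k : ℕ) : e * p ^ k = e := by
  induction k with
  | zero => rw [pow_zero, mul_one]
  | succ k ih => rw [pow_succ, ← mul_assoc, ih, h]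

theorem sub_pow_eq_pow_sub {R : Type*} [Ring R] {p e : R} (he : IsIdempotentElem e)
    (hpe : p * e = e) (hep : e * p = e) {q : ℕ} (hq : q ≠ 0) : (p - e) ^ q = p ^ q - e := by
  induction q with
  | zero => exact absurd rfl hq
  | succ q ih =>
    rcases eq_or_ne q 0 with rfl | hq0
    · rw [zero_add, pow_one, pow_one]
    · rw [pow_succ, ih hq0, sub_mul, mul_sub, mul_sub, pow_mul_eq_of_mul_eq hpe, hep, he.eq,
        ← pow_succ]
      abel

theorem norm_pow_sub_le_pow_div {R : Type*} [SeminormedRing R] {p e : R}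
    (he : IsIdempotentElem e) (hpe : p * e = e) (hep : e * p = e) (hp : ∀ k, ‖p ^ k‖ ≤ 1)
    {m n : ℕ} (hm : 0 < m) (hmn : m ≤ n) {r : ℝ} (hr : ‖p ^ m - e‖ ≤ r) :
    ‖p ^ n - e‖ ≤ r ^ (n / m) := by
  have hq : 0 < n / m := Nat.div_pos hmn hm
  have hsplit : p ^ n - e = p ^ (n % m) * (p ^ m - e) ^ (n / m) := by
    rw [sub_pow_eq_pow_sub he (pow_mul_eq_of_mul_eq hpe m) (mul_pow_eq_of_mul_eq hep m) hq.ne',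
      mul_sub, pow_mul_eq_of_mul_eq hpe, ← pow_mul, ← pow_add, Nat.mod_add_div]
  calc ‖p ^ n - e‖ ≤ ‖p ^ (n % m)‖ * ‖(p ^ m - e) ^ (n / m)‖ := hsplit ▸ norm_mul_le _ _
    _ ≤ 1 * ‖p ^ m - e‖ ^ (n / m) :=
        mul_le_mul (hp _) (norm_pow_le' _ hq) (norm_nonneg _) zero_le_one
    _ ≤ r ^ (n / m) := by
        rw [one_mul]
        exact pow_le_pow_left₀ (norm_nonneg _) hr _

theorem hasSum_pow_div {r : ℝ} (hr₀ : 0 ≤ r) (hr₁ : r < 1) (m : ℕ) [NeZero m] :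
    HasSum (fun t : ℕ => r ^ (t / m)) ((1 - r)⁻¹ * m) := by
  have hgeom := hasSum_geometric_of_lt_one hr₀ hr₁
  have hconst : HasSum (fun _ : Fin m => (1 : ℝ)) m := by
    simpa using hasSum_fintype fun _ : Fin m => (1 : ℝ)
  have hsummable := hgeom.summable.mul_of_nonneg hconst.summable
    (fun n => pow_nonneg hr₀ n) fun _ => zero_le_one
  have hprod := hgeom.mul hconst hsummable
  simp only [mul_one] at hprod
  exact ((Nat.divModEquiv m).hasSum_iff (f := fun p : ℕ × Fin m => r ^ p.1)).2 hprod

theorem pow_add_div_le_mul_pow_div {r : ℝ} (hr₀ : 0 ≤ r) (hr₁ : r ≤ 1) (a b m : ℕ) :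
    r ^ ((a + b) / m) ≤ r ^ (a / m) * r ^ (b / m) := by
  rw [← pow_add]
  exact pow_le_pow_of_le_one hr₀ hr₁ Nat.div_add_div_le_add_div

section ConstantRows

variable {R ι : Type*} [Semiring R] [Fintype ι] {A : Matrix ι ι R} {ν : ι → R}

theorem mul_of_const_rows (hA : A *ᵥ 1 = 1) : A * of (fun _ j => ν j) = of (fun _ j => ν j) := by
  ext i j
  have hrow := congrFun hA i
  simp only [mulVec, dotProduct, Pi.one_apply, mul_one] at hrow
  simp [mul_apply, ← Finset.sum_mul, hrow]

theorem of_const_rows_mul (hν : ν ᵥ* A = ν) :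
    (of (fun _ j => ν j) : Matrix ι ι R) * A = of (fun _ j => ν j) := by
  ext i j
  simpa [mul_apply, vecMul, dotProduct] using congrFun hν j

theorem isIdempotentElem_of_const_rows (hν : ∑ j, ν j = 1) :
    IsIdempotentElem (of (fun _ j => ν j) : Matrix ι ι R) := by
  ext i j
  simp [mul_apply, ← Finset.sum_mul, hν]

end ConstantRows

section LinftyOpNorm

variable {S : Type*} [Fintype S]

theorem linftyNorm_eq_linfty_opNorm [Nonempty S] [DecidableEq S] (A : Matrix S S ℝ) :
    linftyNorm A = ‖A‖ := by
  rw [linfty_opNorm_def, ← Finset.sup'_eq_sup Finset.univ_nonempty,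
    Finset.apply_sup'_eq_sup'_comp _ _ NNReal.coe_max]
  simp [linftyNorm, Function.comp_def]

variable [DecidableEq S] {P : Matrix S S ℝ}

theorem linfty_opNorm_le_one_of_mem_rowStochastic (hP : P ∈ rowStochastic ℝ S) : ‖P‖ ≤ 1 := by
  rw [linfty_opNorm_def, NNReal.coe_le_one]
  refine Finset.sup_le fun i _ => ?_
  rw [← NNReal.coe_le_one]
  push_cast
  simp only [Real.norm_eq_abs]
  rw [Finset.sum_congr rfl fun j _ => abs_of_nonneg (nonneg_of_mem_rowStochastic hP),
    sum_row_of_mem_rowStochastic hP i]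

theorem linfty_opNorm_pow_sub_le_of_mixing (hP : P ∈ rowStochastic ℝ S) {ν : S → ℝ}
    (hν : ν ᵥ* P = ν) (hν₁ : ∑ j, ν j = 1) {m n : ℕ} (hm : 0 < m) (hmn : m ≤ n) {r : ℝ}
    (hmix : ‖P ^ m - of (fun _ j => ν j)‖ ≤ r) :
    ‖P ^ n - of (fun _ j => ν j)‖ ≤ r ^ (n / m) :=
  norm_pow_sub_le_pow_div (isIdempotentElem_of_const_rows hν₁)
    (mul_of_const_rows (one_vecMul_of_mem_rowStochastic hP)) (of_const_rows_mul hν)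
    (fun k => linfty_opNorm_le_one_of_mem_rowStochastic (pow_mem hP k)) hm hmn hmix

theorem norm_of_const_rows_sub_pow_mulVec_apply_le (hP : P ∈ rowStochastic ℝ S) {ν : S → ℝ}
    (hν : ν ᵥ* P = ν) (hν₁ : ∑ j, ν j = 1) {m n : ℕ} (hm : 0 < m) (hmn : m ≤ n) {r : ℝ}
    (hmix : ‖P ^ m - of (fun _ j => ν j)‖ ≤ r) {c : S → ℝ} {C : ℝ} (hc : ‖c‖ ≤ C) (s : S) :
    ‖((of (fun _ j => ν j) - P ^ n) *ᵥ c) s‖ ≤ r ^ (n / m) * C :=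
  calc ‖((of (fun _ j => ν j) - P ^ n) *ᵥ c) s‖
      ≤ ‖(of (fun _ j => ν j) - P ^ n) *ᵥ c‖ := norm_le_pi_norm _ s
    _ ≤ ‖P ^ n - of (fun _ j => ν j)‖ * ‖c‖ :=
        norm_sub_rev (of (fun _ j => ν j)) (P ^ n) ▸ linfty_opNorm_mulVec _ _
    _ ≤ r ^ (n / m) * C :=
        mul_le_mul (linfty_opNorm_pow_sub_le_of_mixing hP hν hν₁ hm hmn hmix) hc (norm_nonneg _)
          (pow_nonneg ((norm_nonneg _).trans hmix) _)

end LinftyOpNorm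

theorem stmt4_general {S : Type*} [Fintype S] [Nonempty S] [DecidableEq S]
    (P : Matrix S S ℝ) (ν : S → ℝ)
    (hPnn : ∀ i j, 0 ≤ P i j) (hProw : ∀ i, ∑ j, P i j = 1)
    (hνsum : ∑ j, ν j = 1)
    (hstat : ∀ j, ∑ i, ν i * P i j = ν j)
    (tmix : ℕ) (htmix : 1 ≤ tmix)
    (hmix : linftyNorm (P ^ tmix - Matrix.of (fun _ j => ν j)) ≤ 1 / 2)
    (c : S → ℝ) (cbar : ℝ) (hc : ∀ i, |c i| ≤ cbar)
    (T' : ℕ) (hT' : tmix ≤ T') :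
    (∀ s : S, Summable (fun t : ℕ =>
        |((Matrix.of (fun _ j => ν j) - P ^ (T' + t)).mulVec c) s|)) ∧
    (∀ s : S, |∑' t : ℕ, ((Matrix.of (fun _ j => ν j) - P ^ (T' + t)).mulVec c) s|
        ≤ 2 * cbar * tmix * (1 / 2 : ℝ) ^ (T' / tmix)) := by
  have : NeZero tmix := ⟨by omega⟩
  have hP : P ∈ rowStochastic ℝ S := mem_rowStochastic_iff_sum.2 ⟨hPnn, hProw⟩
  have hcbar₀ : 0 ≤ cbar := (abs_nonneg _).trans (hc (Classical.arbitrary S))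
  have hcbar : ‖c‖ ≤ cbar := (pi_norm_le_iff_of_nonneg hcbar₀).2 hc
  have hmix' := (linftyNorm_eq_linfty_opNorm _).symm.trans_le hmix
  have hterm : ∀ t s, ‖((of (fun _ j => ν j) - P ^ (T' + t)) *ᵥ c) s‖
      ≤ cbar * (1 / 2 : ℝ) ^ (T' / tmix) * (1 / 2 : ℝ) ^ (t / tmix) := fun t s =>
    calc ‖((of (fun _ j => ν j) - P ^ (T' + t)) *ᵥ c) s‖
        ≤ (1 / 2 : ℝ) ^ ((T' + t) / tmix) * cbar :=
          norm_of_const_rows_sub_pow_mulVec_apply_le hP (funext hstat) hνsum htmix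
            (hT'.trans (Nat.le_add_right T' t)) hmix' hcbar s
      _ ≤ (1 / 2 : ℝ) ^ (T' / tmix) * (1 / 2 : ℝ) ^ (t / tmix) * cbar :=
          mul_le_mul_of_nonneg_right (pow_add_div_le_mul_pow_div (by norm_num) (by norm_num) ..)
            hcbar₀
      _ = cbar * (1 / 2 : ℝ) ^ (T' / tmix) * (1 / 2 : ℝ) ^ (t / tmix) := by ring
  have hsum : HasSum (fun t : ℕ => cbar * (1 / 2 : ℝ) ^ (T' / tmix) * (1 / 2 : ℝ) ^ (t / tmix))
      (2 * cbar * tmix * (1 / 2 : ℝ) ^ (T' / tmix)) := by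
    have h := (hasSum_pow_div (r := 1 / 2) (by norm_num) (by norm_num) tmix).mul_left
      (cbar * (1 / 2 : ℝ) ^ (T' / tmix))
    rwa [show cbar * (1 / 2 : ℝ) ^ (T' / tmix) * ((1 - 1 / 2)⁻¹ * tmix)
      = 2 * cbar * tmix * (1 / 2 : ℝ) ^ (T' / tmix) by ring] at h
  refine ⟨fun s => ?_, fun s => ?_⟩
  · simpa only [Real.norm_eq_abs] using
      hsum.summable.of_nonneg_of_le (fun _ => norm_nonneg _) (fun t => hterm t s)
  · simpa only [Real.norm_eq_abs] using tsum_of_norm_bounded hsum fun t => hterm t s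

/-- the truncation error `Σ_{t=T'}^∞ (1νᵀ − P^t) c` converges absolutely
(componentwise) and is bounded in ℓ∞-norm by `2 c̄ t_mix (1/2)^{⌊T'/t_mix⌋}`. -/
theorem stmt4 {S : Type*} [Fintype S] [Nonempty S] [DecidableEq S]
    (P : Matrix S S ℝ) (ν : S → ℝ)
    (hPnn : ∀ i j, 0 ≤ P i j) (hProw : ∀ i, ∑ j, P i j = 1)
    (hνnn : ∀ j, 0 ≤ ν j) (hνsum : ∑ j, ν j = 1)
    (hstat : ∀ j, ∑ i, ν i * P i j = ν j)
    (tmix : ℕ) (htmix : 1 ≤ tmix)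
    (hmix : linftyNorm (P ^ tmix - Matrix.of (fun _ j => ν j)) ≤ 1 / 2)
    (c : S → ℝ) (cbar : ℝ) (hc : ∀ i, |c i| ≤ cbar)
    (T' : ℕ) (hT' : tmix ≤ T') :
    (∀ s : S, Summable (fun t : ℕ =>
        |((Matrix.of (fun _ j => ν j) - P ^ (T' + t)).mulVec c) s|)) ∧
    (∀ s : S, |∑' t : ℕ, ((Matrix.of (fun _ j => ν j) - P ^ (T' + t)).mulVec c) s|
        ≤ 2 * cbar * tmix * (1 / 2 : ℝ) ^ (T' / tmix)) :=
  stmt4_general P ν hPnn hProw hνsum hstat tmix htmix hmix c cbar hc T' hT'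
end

section
/- Performance difference lemma for average-reward MDPs: let π and π' be two policies on a finite MDP with transition kernel 𝖯 and cost c, let ν^{π'} be a stationary distribution of the state chain induced by π', let ρ(π) be the average cost of π, and let Q̄^π be any solution of the Bellman equation Q̄^π(s,a) = c(s,a) + h^π(s) − ρ(π) + Σ_{s'} 𝖯(s'|s,a) Σ_{a'} π(a'|s') Q̄^π(s',a'). Then ρ(π') − ρ(π) = E_{s∼ν^{π'}}[ ⟨Q̄^π(s,·), π'(·|s) − π(·|s)⟩ + h^{π'}(s) − h^π(s) ], where ρ(π') = E_{s∼ν^{π'}}[c^{π'}(s) + h^{π'}(s)] with c^{π'}(s) = Σ_a π'(a|s) c(s,a). -/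
/-!
Averaging the Bellman equation over `a ∼ π'(·|s)` expresses `E_{π'}[Q̄^π(s,·)]` through the cost,
`h^π(s) - ρ(π)` and the expected next value `E[V̄^π(s')]`. Averaging once more over `s ∼ ν^{π'}`,
stationarity turns `E[V̄^π(s')]` into `E_{ν^{π'}}[V̄^π]`, and subtracting that leaves exactly
`ρ(π') - ρ(π)` on one side and the advantage terms on the other.
-/

open Finset

section

variable {S A : Type*} [Fintype S] [Fintype A]

theorem sum_stationary_mul_expected_next (Pr : S → A → S → ℝ) (π : S → A → ℝ)
    (ν : S → ℝ) (hstat : ∀ s', ∑ s, ν s * ∑ a, π s a * Pr s a s' = ν s') (f : S → ℝ) :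
    ∑ s, ν s * ∑ a, π s a * ∑ s', Pr s a s' * f s' = ∑ s, ν s * f s := by
  calc ∑ s, ν s * ∑ a, π s a * ∑ s', Pr s a s' * f s'
      = ∑ s', (∑ s, ν s * ∑ a, π s a * Pr s a s') * f s' := by
        simp only [mul_sum, sum_mul, mul_assoc]
        exact (sum_congr rfl fun _ _ => sum_comm).trans sum_comm
    _ = ∑ s', ν s' * f s' := by simp only [hstat]

theorem sum_policy_mul_of_bellman (Pr : S → A → S → ℝ) (c : S → A → ℝ) (h : S → ℝ) (ρ : ℝ)
    (π π' : S → A → ℝ) (hπ'sum : ∀ s, ∑ a, π' s a = 1) (Q : S → A → ℝ)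
    (hBellman : ∀ s a, Q s a = c s a + h s - ρ + ∑ s', Pr s a s' * ∑ a', π s' a' * Q s' a')
    (s : S) :
    ∑ a, π' s a * Q s a = ∑ a, π' s a * c s a + (h s - ρ)
      + ∑ a, π' s a * ∑ s', Pr s a s' * ∑ a', π s' a' * Q s' a' := by
  conv_lhs => simp only [hBellman s, add_sub_assoc, mul_add]
  rw [sum_add_distrib, sum_add_distrib, ← sum_mul, hπ'sum, one_mul]

end

theorem stmt15_general {S A : Type*} [Fintype S] [Fintype A]
    (Pr : S → A → S → ℝ)
    (c : S → A → ℝ) (h h' : S → ℝ)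
    (π π' : S → A → ℝ)
    (hπ'sum : ∀ s, ∑ a, π' s a = 1)
    (ν' : S → ℝ) (hν'sum : ∑ s, ν' s = 1)
    (hstat : ∀ s', ∑ s, ν' s * ∑ a, π' s a * Pr s a s' = ν' s')
    (ρπ : ℝ) (Qbar : S → A → ℝ)
    (hBellman : ∀ s a, Qbar s a
        = c s a + h s - ρπ + ∑ s', Pr s a s' * ∑ a', π s' a' * Qbar s' a') :
    (∑ s, ν' s * ((∑ a, π' s a * c s a) + h' s)) - ρπ
      = ∑ s, ν' s * ((∑ a, Qbar s a * (π' s a - π s a)) + h' s - h s) := by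
  set V : S → ℝ := fun s => ∑ a, π s a * Qbar s a with hV
  have hexpect : ∑ s, ν' s * ∑ a, π' s a * Qbar s a
      = ∑ s, ν' s * ((∑ a, π' s a * c s a) + (h s - ρπ)) + ∑ s, ν' s * V s := by
    rw [← sum_stationary_mul_expected_next Pr π' ν' hstat V, ← sum_add_distrib]
    simp only [sum_policy_mul_of_bellman Pr c h ρπ π π' hπ'sum Qbar hBellman, mul_add]
    rfl
  have hadvantage : ∀ s, ∑ a, Qbar s a * (π' s a - π s a) = ∑ a, π' s a * Qbar s a - V s := by
    intro s
    simp only [hV, ← sum_sub_distrib, mul_sub, mul_comm]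
  have hρ : ∑ s, ν' s * ρπ = ρπ := by rw [← sum_mul, hν'sum, one_mul]
  simp only [hadvantage]
  simp only [mul_add, mul_sub, sum_add_distrib, sum_sub_distrib] at hexpect ⊢
  linarith

/-- performance difference lemma for average-reward MDPs:
`ρ(π') − ρ(π) = E_{s∼ν^{π'}}[⟨Q̄^π(s,·), π'(·|s) − π(·|s)⟩ + h^{π'}(s) − h^π(s)]`,
where `ρ(π') = E_{s∼ν^{π'}}[c^{π'}(s) + h^{π'}(s)]`. -/
theorem stmt15 {S A : Type*} [Fintype S] [Fintype A]
    (Pr : S → A → S → ℝ)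
    (hPrnn : ∀ s a s', 0 ≤ Pr s a s') (hPrsum : ∀ s a, ∑ s', Pr s a s' = 1)
    (c : S → A → ℝ) (h h' : S → ℝ)
    (π π' : S → A → ℝ)
    (hπnn : ∀ s a, 0 ≤ π s a) (hπsum : ∀ s, ∑ a, π s a = 1)
    (hπ'nn : ∀ s a, 0 ≤ π' s a) (hπ'sum : ∀ s, ∑ a, π' s a = 1)
    (ν' : S → ℝ) (hν'nn : ∀ s, 0 ≤ ν' s) (hν'sum : ∑ s, ν' s = 1)
    (hstat : ∀ s', ∑ s, ν' s * ∑ a, π' s a * Pr s a s' = ν' s')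
    (ρπ : ℝ) (Qbar : S → A → ℝ)
    (hBellman : ∀ s a, Qbar s a
        = c s a + h s - ρπ + ∑ s', Pr s a s' * ∑ a', π s' a' * Qbar s' a') :
    (∑ s, ν' s * ((∑ a, π' s a * c s a) + h' s)) - ρπ
      = ∑ s, ν' s * ((∑ a, Qbar s a * (π' s a - π s a)) + h' s - h s) :=
  stmt15_general Pr c h h' π π' hπ'sum ν' hν'sum hstat ρπ Qbar hBellman
end
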